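/- arXiv:1802.04137 — 2 statements merged into one kernel-verified Lean document; each statement's English description precedes it below -/
import Mathlib

section
/- For any two Borel sets A, A' ⊆ ℝ, the Hausdorff dimension of the product set A × A' is at most the Hausdorff dimension of A plus the packing dimension of A'. -/
open Filter MeasureTheory Set
open scoped ENNReal

/-- Minimal number of closed balls of radius `r` needed to cover `A`. -/
noncomputable def covN (A : Set ℝ) (r : ℝ) : ℕ∞ :=
  ⨅ (t : Finset ℝ) (_ : A ⊆ ⋃ x ∈ t, Metric.closedBall x r), (t.card : ℕ∞)

/-- Upper box dimension, computed along scales `2⁻¹ ^ N`. -/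
noncomputable def ubox (A : Set ℝ) : ℝ≥0∞ :=
  Filter.limsup (fun N : ℕ =>
    if covN A ((2 : ℝ)⁻¹ ^ N) = ⊤ then (⊤ : ℝ≥0∞)
    else ENNReal.ofReal (Real.logb 2 ((covN A ((2 : ℝ)⁻¹ ^ N)).toNat) / N)) Filter.atTop

/-- Packing dimension via countable covers and upper box dimension. -/
noncomputable def packDim (A : Set ℝ) : ℝ≥0∞ :=
  ⨅ (f : ℕ → Set ℝ) (_ : A ⊆ ⋃ n, f n), ⨆ n, ubox (f n)

/-!
Let `s > dimH A` and `τ > ubox A'`. Cover `A` by sets `Uᵢ` of diameter at most `ρᵢ` with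
`∑ ρᵢ ^ s` arbitrarily small, and cover `A'` by at most `2 ^ τ * ρᵢ ^ (-τ)` balls of radius `ρᵢ`.
The products `Uᵢ × ball` have diameter at most `2 ρᵢ`, so their `(s + τ)`-sum is `O(∑ ρᵢ ^ s)`,
hence `μH[s + τ] (A × A') = 0` and `dimH (A × A') ≤ s + τ`. Countable stability of `dimH`
then upgrades `ubox A'` to `packDim A'`.
-/

open Metric NNReal Topology MeasureTheory.Measure

lemma ediam_prod_le {X Y : Type*} [PseudoEMetricSpace X] [PseudoEMetricSpace Y]
    (s : Set X) (t : Set Y) : ediam (s ×ˢ t) ≤ max (ediam s) (ediam t) :=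
  ediam_le fun p hp q hq => (Prod.edist_eq p q).symm ▸
    max_le_max (edist_le_ediam_of_mem hp.1 hq.1) (edist_le_ediam_of_mem hp.2 hq.2)

lemma ediam_prod_closedBall_le {X Y : Type*} [PseudoEMetricSpace X] [PseudoMetricSpace Y]
    {U : Set X} {ρ : ℝ≥0} (hU : ediam U ≤ ρ) (y : Y) :
    ediam (U ×ˢ closedBall y ρ) ≤ 2 * ρ :=
  (ediam_prod_le _ _).trans <| max_le (hU.trans (le_mul_of_one_le_left zero_le one_le_two))
    (closedEBall_coe (x := y) ▸ ediam_closedEBall_le)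

lemma tsum_ediam_prod_closedBall_rpow_le {X Y : Type*} [PseudoEMetricSpace X]
    [PseudoMetricSpace Y] {U : Set X} {F : Finset Y} {ρ : ℝ≥0} (hρ : ρ ≠ 0) {s τ : ℝ}
    (hs : 0 ≤ s) (hτ : 0 ≤ τ) (hU : ediam U ≤ ρ)
    (hF : (F.card : ℝ≥0∞) ≤ 2 ^ τ * (ρ : ℝ≥0∞)⁻¹ ^ τ) :
    ∑' x : F, ediam (U ×ˢ closedBall (x : Y) ρ) ^ (s + τ) ≤
      2 ^ τ * 2 ^ (s + τ) * (ρ : ℝ≥0∞) ^ s := by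
  have hρτ : (ρ : ℝ≥0∞)⁻¹ ^ τ * (ρ : ℝ≥0∞) ^ τ = 1 := by
    rw [← ENNReal.mul_rpow_of_nonneg _ _ hτ,
      ENNReal.inv_mul_cancel (ENNReal.coe_ne_zero.2 hρ) ENNReal.coe_ne_top, ENNReal.one_rpow]
  calc ∑' x : F, ediam (U ×ˢ closedBall (x : Y) ρ) ^ (s + τ)
      ≤ ∑' _ : F, (2 * (ρ : ℝ≥0∞)) ^ (s + τ) := ENNReal.tsum_le_tsum fun x =>
        ENNReal.rpow_le_rpow (ediam_prod_closedBall_le hU _) (add_nonneg hs hτ)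
    _ = F.card * (2 * (ρ : ℝ≥0∞)) ^ (s + τ) := by
      rw [tsum_fintype, Finset.sum_const, Finset.card_univ, Fintype.card_coe, nsmul_eq_mul]
    _ ≤ 2 ^ τ * (ρ : ℝ≥0∞)⁻¹ ^ τ * (2 * (ρ : ℝ≥0∞)) ^ (s + τ) := by gcongr
    _ = 2 ^ τ * 2 ^ (s + τ) * (ρ : ℝ≥0∞) ^ s * ((ρ : ℝ≥0∞)⁻¹ ^ τ * (ρ : ℝ≥0∞) ^ τ) := by
      rw [ENNReal.mul_rpow_of_nonneg _ _ (add_nonneg hs hτ),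
        ENNReal.rpow_add s τ (ENNReal.coe_ne_zero.2 hρ) ENNReal.coe_ne_top]
      ring
    _ = 2 ^ τ * 2 ^ (s + τ) * (ρ : ℝ≥0∞) ^ s := by rw [hρτ, mul_one]

section Hausdorff

variable {X : Type*} [EMetricSpace X] [MeasurableSpace X] [BorelSpace X]

lemma hausdorffMeasure_eq_zero_of_forall_exists_cover {d : ℝ} {S : Set X}
    (h : ∀ δ : ℝ≥0, 0 < δ → ∃ (ι : Type) (_ : Countable ι) (t : ι → Set X),
      S ⊆ ⋃ i, t i ∧ (∀ i, ediam (t i) ≤ δ) ∧ ∑' i, ediam (t i) ^ d ≤ δ) :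
    μH[d] S = 0 := by
  choose ι hι t hcov hdiam hsum using fun n : ℕ => h (1 / (n + 1)) (by positivity)
  have hr : Tendsto (fun n : ℕ => ((1 / (n + 1) : ℝ≥0) : ℝ≥0∞)) atTop (𝓝 0) :=
    ENNReal.tendsto_coe.2 tendsto_one_div_add_atTop_nhds_zero_nat
  refine nonpos_iff_eq_zero.1 ?_
  calc μH[d] S ≤ liminf (fun n => ∑' i, ediam (t n i) ^ d) atTop :=
        hausdorffMeasure_le_liminf_tsum d S _ hr t (.of_forall hdiam) (.of_forall hcov)
    _ ≤ liminf (fun n : ℕ => ((1 / (n + 1) : ℝ≥0) : ℝ≥0∞)) atTop :=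
        liminf_le_liminf (.of_forall hsum)
    _ = 0 := hr.liminf_eq

lemma exists_cover_tsum_ediam_rpow_lt {d : ℝ} (hd : 0 < d) {S : Set X} {ε : ℝ≥0∞}
    (hS : μH[d] S < ε) {δ : ℝ≥0∞} (hδ : 0 < δ) :
    ∃ U : ℕ → Set X, S ⊆ ⋃ n, U n ∧ (∀ n, ediam (U n) ≤ δ) ∧ ∑' n, ediam (U n) ^ d < ε := by
  rw [hausdorffMeasure_apply] at hS
  have := hS.trans_le' (le_iSup₂_of_le δ hδ le_rfl)
  simp only [iInf_lt_iff] at this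
  obtain ⟨U, hcov, hdiam, hsum⟩ := this
  refine ⟨U, hcov, hdiam, lt_of_le_of_lt (ENNReal.tsum_le_tsum fun n => ?_) hsum⟩
  rcases (U n).eq_empty_or_nonempty with h | h
  · simp [h, ENNReal.zero_rpow_of_pos hd]
  · exact le_iSup_of_le (ι := (U n).Nonempty) h le_rfl

lemma exists_cover_radii_of_hausdorffMeasure_eq_zero {s : ℝ} (hs : 0 < s) {S : Set X}
    (hS : μH[s] S = 0) {δ : ℝ≥0} (hδ : 0 < δ) {ε : ℝ≥0∞} (hε : 0 < ε) :
    ∃ (U : ℕ → Set X) (ρ : ℕ → ℝ≥0), S ⊆ ⋃ i, U i ∧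
      (∀ i, 0 < ρ i ∧ ρ i ≤ δ ∧ ediam (U i) ≤ ρ i) ∧ ∑' i, (ρ i : ℝ≥0∞) ^ s ≤ ε := by
  have hε2 : 0 < ε / 2 := ENNReal.half_pos hε.ne'
  obtain ⟨U, hcov, hdiam, hsum⟩ :=
    exists_cover_tsum_ediam_rpow_lt hs (hS ▸ hε2) (ENNReal.coe_pos.2 hδ)
  obtain ⟨η, hη, hηsum⟩ := ENNReal.exists_pos_sum_of_countable hε2.ne' ℕ
  have hU i : ((ediam (U i)).toNNReal : ℝ≥0∞) = ediam (U i) :=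
    ENNReal.coe_toNNReal (ne_top_of_le_ne_top ENNReal.coe_ne_top (hdiam i))
  -- pad the diameters, which may vanish, by `η i ^ s⁻¹`; their `s`-th powers sum to `< ε / 2`
  refine ⟨U, fun i => max (ediam (U i)).toNNReal (min δ (η i ^ s⁻¹)), hcov,
    fun i => ⟨?_, ?_, ?_⟩, ?_⟩
  · exact lt_max_of_lt_right (lt_min hδ (NNReal.rpow_pos (hη i)))
  · exact max_le (by exact_mod_cast (hU i).trans_le (hdiam i)) (min_le_left _ _)
  · exact (hU i).symm.trans_le (by exact_mod_cast le_max_left _ _)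
  calc ∑' i, ((max (ediam (U i)).toNNReal (min δ (η i ^ s⁻¹)) : ℝ≥0) : ℝ≥0∞) ^ s
      ≤ ∑' i, (ediam (U i) ^ s + η i) := ENNReal.tsum_le_tsum fun i => ?_
    _ = ∑' i, ediam (U i) ^ s + ∑' i, (η i : ℝ≥0∞) := ENNReal.tsum_add
    _ ≤ ε / 2 + ε / 2 := add_le_add hsum.le hηsum.le
    _ = ε := ENNReal.add_halves ε
  have hηi : ((min δ (η i ^ s⁻¹) : ℝ≥0) : ℝ≥0∞) ^ s ≤ η i := by
    rw [← ENNReal.coe_rpow_of_nonneg _ hs.le, ENNReal.coe_le_coe]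
    calc min δ (η i ^ s⁻¹) ^ s ≤ (η i ^ s⁻¹) ^ s := NNReal.rpow_le_rpow (min_le_right _ _) hs.le
      _ = η i := NNReal.rpow_inv_rpow hs.ne' _
  rw [ENNReal.coe_max, hU, (ENNReal.monotone_rpow_of_nonneg hs.le).map_max]
  exact (max_le_add_of_nonneg zero_le zero_le).trans (add_le_add_right hηi _)

end Hausdorff

lemma exists_finset_card_eq_covN {A : Set ℝ} {r : ℝ} (h : covN A r ≠ ⊤) :
    ∃ F : Finset ℝ, A ⊆ ⋃ x ∈ F, closedBall x r ∧ (F.card : ℕ∞) = covN A r := by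
  unfold covN at h ⊢
  rw [iInf_subtype'] at h ⊢
  obtain ⟨F, -⟩ := iInf_lt_iff.1 (lt_top_iff_ne_top.2 h)
  have : Nonempty {F : Finset ℝ // A ⊆ ⋃ x ∈ F, closedBall x r} := ⟨F⟩
  obtain ⟨⟨F, hF⟩, hmin⟩ := ENat.exists_eq_iInf
    fun F : {F : Finset ℝ // A ⊆ ⋃ x ∈ F, closedBall x r} => (F.1.card : ℕ∞)
  exact ⟨F, hF, hmin⟩

lemma eventually_exists_cover_card_le_of_ubox_lt {B : Set ℝ} {τ : ℝ≥0} (h : ubox B < τ) :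
    ∀ᶠ N : ℕ in atTop, ∃ F : Finset ℝ,
      B ⊆ ⋃ x ∈ F, closedBall x ((2 : ℝ)⁻¹ ^ N) ∧ (F.card : ℝ) ≤ 2 ^ (τ * N : ℝ) := by
  filter_upwards [eventually_lt_of_limsup_lt h, eventually_ge_atTop 1] with N hN hN1
  have hfin : covN B ((2 : ℝ)⁻¹ ^ N) ≠ ⊤ := fun htop => by
    rw [if_pos htop] at hN
    exact not_top_lt hN
  obtain ⟨F, hcov, hcard⟩ := exists_finset_card_eq_covN hfin
  refine ⟨F, hcov, ?_⟩
  rcases (F.card).eq_zero_or_pos with h0 | hpos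
  · rw [h0, Nat.cast_zero]
    positivity
  have hcard_pos : (0 : ℝ) < F.card := by exact_mod_cast hpos
  rw [if_neg hfin, ← hcard, ENat.toNat_natCast, ENNReal.ofReal_lt_coe_iff
      (div_nonneg (Real.logb_nonneg one_lt_two (by exact_mod_cast hpos)) N.cast_nonneg),
    div_lt_iff₀ (by exact_mod_cast hN1)] at hN
  exact ((Real.logb_lt_iff_lt_rpow one_lt_two hcard_pos).1 hN).le

lemma exists_cover_card_le_of_ubox_lt {B : Set ℝ} {τ : ℝ≥0} (h : ubox B < τ) :
    ∃ δ : ℝ≥0, 0 < δ ∧ ∀ ρ : ℝ≥0, 0 < ρ → ρ ≤ δ → ∃ F : Finset ℝ,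
      B ⊆ ⋃ x ∈ F, closedBall x ρ ∧ (F.card : ℝ≥0∞) ≤ 2 ^ (τ : ℝ) * (ρ : ℝ≥0∞)⁻¹ ^ (τ : ℝ) := by
  obtain ⟨N₀, hN₀⟩ := eventually_atTop.1 (eventually_exists_cover_card_le_of_ubox_lt h)
  refine ⟨2⁻¹ ^ N₀, by positivity, fun ρ hρ hρδ => ?_⟩
  have h2 : (2⁻¹ : ℝ≥0) < 1 := by norm_num
  -- `ubox` only controls dyadic scales, so locate `2⁻¹ ^ (n + 1) < ρ ≤ 2⁻¹ ^ n`
  obtain ⟨n, hlt, hle⟩ :=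
    exists_nat_pow_near_of_lt_one hρ (hρδ.trans (pow_le_one₀ zero_le h2.le)) (by norm_num) h2
  have hn : N₀ ≤ n + 1 := ((pow_lt_pow_iff_right_of_lt_one₀ (by norm_num) h2).1
    (hlt.trans_le hρδ)).le
  obtain ⟨F, hcov, hcard⟩ := hN₀ (n + 1) hn
  refine ⟨F, hcov.trans (iUnion₂_mono fun x _ => closedBall_subset_closedBall ?_), ?_⟩
  · exact_mod_cast hlt.le
  have hρn : (2 : ℝ≥0∞) ^ n ≤ (ρ : ℝ≥0∞)⁻¹ := by
    rw [ENNReal.le_inv_iff_le_inv, ENNReal.inv_pow]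
    calc (ρ : ℝ≥0∞) ≤ ((2⁻¹ ^ n : ℝ≥0) : ℝ≥0∞) := ENNReal.coe_le_coe.2 hle
      _ = 2⁻¹ ^ n := by rw [ENNReal.coe_pow, ENNReal.coe_inv two_ne_zero, ENNReal.coe_ofNat]
  calc (F.card : ℝ≥0∞) = ENNReal.ofReal F.card := (ENNReal.ofReal_natCast _).symm
    _ ≤ ENNReal.ofReal (2 ^ (τ * (n + 1 : ℕ) : ℝ)) := ENNReal.ofReal_le_ofReal hcard
    _ = 2 ^ (τ : ℝ) * ((2 : ℝ≥0∞) ^ n) ^ (τ : ℝ) := by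
      rw [← ENNReal.ofReal_rpow_of_pos two_pos, ENNReal.ofReal_ofNat, ← ENNReal.rpow_natCast,
        ← ENNReal.rpow_mul, ← ENNReal.rpow_add _ _ two_ne_zero ENNReal.ofNat_ne_top]
      push_cast
      ring_nf
    _ ≤ 2 ^ (τ : ℝ) * (ρ : ℝ≥0∞)⁻¹ ^ (τ : ℝ) := by gcongr

lemma hausdorffMeasure_prod_eq_zero_of_ubox_lt {A B : Set ℝ} {s τ : ℝ≥0} (hs : 0 < s)
    (hA : μH[s] A = 0) (hB : ubox B < τ) : μH[↑(s + τ)] (A ×ˢ B) = 0 := by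
  obtain ⟨δ₀, hδ₀, hBcov⟩ := exists_cover_card_le_of_ubox_lt hB
  set C : ℝ≥0∞ := 2 ^ (τ : ℝ) * 2 ^ ((s : ℝ) + τ)
  have hC0 : C ≠ 0 := by positivity
  have hCtop : C ≠ ⊤ := by finiteness
  refine hausdorffMeasure_eq_zero_of_forall_exists_cover fun δ hδ => ?_
  obtain ⟨U, ρ, hcov, hρ, hsum⟩ := exists_cover_radii_of_hausdorffMeasure_eq_zero
    (NNReal.coe_pos.2 hs) hA (lt_min hδ₀ (half_pos hδ))
    (ENNReal.div_pos (ENNReal.coe_ne_zero.2 hδ.ne') hCtop)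
  choose F hFcov hFcard using fun i => hBcov (ρ i) (hρ i).1 ((hρ i).2.1.trans (min_le_left _ _))
  refine ⟨Σ i, F i, inferInstance, fun p => U p.1 ×ˢ closedBall (p.2 : ℝ) (ρ p.1), ?_, ?_, ?_⟩
  · rintro ⟨a, b⟩ ⟨ha, hb⟩
    obtain ⟨i, hi⟩ := mem_iUnion.1 (hcov ha)
    obtain ⟨x, hx, hbx⟩ := mem_iUnion₂.1 (hFcov i hb)
    exact mem_iUnion.2 ⟨⟨i, x, hx⟩, hi, hbx⟩
  · rintro ⟨i, x⟩
    refine (ediam_prod_closedBall_le (hρ i).2.2 _).trans ?_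
    have : 2 * ρ i ≤ δ := (le_div_iff₀' two_pos).1 ((hρ i).2.1.trans (min_le_right _ _))
    exact_mod_cast this
  calc ∑' p : Σ i, F i, ediam (U p.1 ×ˢ closedBall (p.2 : ℝ) (ρ p.1)) ^ ((s + τ : ℝ≥0) : ℝ)
      = ∑' i, ∑' x : F i, ediam (U i ×ˢ closedBall (x : ℝ) (ρ i)) ^ ((s : ℝ) + τ) :=
        ENNReal.tsum_sigma' _
    _ ≤ ∑' i, C * (ρ i : ℝ≥0∞) ^ (s : ℝ) := ENNReal.tsum_le_tsum fun i =>
        tsum_ediam_prod_closedBall_rpow_le (hρ i).1.ne' s.2 τ.2 (hρ i).2.2 (hFcard i)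
    _ = C * ∑' i, (ρ i : ℝ≥0∞) ^ (s : ℝ) := ENNReal.tsum_mul_left
    _ ≤ C * (δ / C) := by gcongr
    _ = δ := ENNReal.mul_div_cancel hC0 hCtop

lemma dimH_prod_le_add_ubox (A B : Set ℝ) : dimH (A ×ˢ B) ≤ dimH A + ubox B := by
  refine le_of_forall_gt fun c hc => ?_
  obtain ⟨s', hs', τ', hτ', hc⟩ := ENNReal.exists_add_lt_of_add_lt hc
  obtain ⟨s, hAs, hss'⟩ := ENNReal.lt_iff_exists_nnreal_btwn.1 hs'
  obtain ⟨τ, hBτ, hττ'⟩ := ENNReal.lt_iff_exists_nnreal_btwn.1 hτ'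
  have hμ := hausdorffMeasure_prod_eq_zero_of_ubox_lt (ENNReal.coe_pos.1 (zero_le.trans_lt hAs))
    (hausdorffMeasure_of_dimH_lt hAs) hBτ
  calc dimH (A ×ˢ B) ≤ ↑(s + τ) := dimH_le_of_hausdorffMeasure_ne_top (hμ ▸ ENNReal.zero_ne_top)
    _ < c := (ENNReal.coe_add s τ ▸ ENNReal.add_lt_add hss' hττ').trans hc

theorem stmt0_general (A A' : Set ℝ) :
    dimH (A ×ˢ A' : Set (ℝ × ℝ)) ≤ dimH A + packDim A' := by
  simp only [packDim, ENNReal.add_iInf]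
  refine le_iInf₂ fun f hf => ?_
  calc dimH (A ×ˢ A') ≤ dimH (⋃ n, A ×ˢ f n) := dimH_mono (prod_iUnion ▸ prod_mono le_rfl hf)
    _ = ⨆ n, dimH (A ×ˢ f n) := dimH_iUnion _
    _ ≤ ⨆ n, (dimH A + ubox (f n)) := iSup_mono fun n => dimH_prod_le_add_ubox A (f n)
    _ = dimH A + ⨆ n, ubox (f n) := (ENNReal.add_iSup _).symm

theorem stmt0 (A A' : Set ℝ) (hA : MeasurableSet A) (hA' : MeasurableSet A') :
    dimH (A ×ˢ A' : Set (ℝ × ℝ)) ≤ dimH A + packDim A' :=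
  stmt0_general A A'
end

section
/- If every subset of ℕ with positive lower natural density contains arbitrarily long arithmetic progressions, then every subset of ℕ with positive upper natural density contains arbitrarily long arithmetic progressions. -/
/-!
If `A` has upper density `c > 0`, then for every `i` some window `[w i, w i + 2 ^ i)` contains at
least `c / 2 · 2 ^ i` elements of `A` (otherwise cutting `[1, n]` into such windows would keep the
density of `A` below `c / 2`). Placing a translate of the `i`-th window on the dyadic block
`[2 ^ i, 2 ^ (i + 1))` gives a set `B` of lower density at least `c / 8`. A progression of length
`4k` in `B` has `k` consecutive terms inside a single block, and translating them back gives a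
`k`-term progression in `A`.
-/

/-- `A` contains an `m`-term arithmetic progression. -/
def HasAP (A : Set ℕ) (m : ℕ) : Prop :=
  ∃ a d : ℕ, 1 ≤ d ∧ ∀ t < m, a + t * d ∈ A

/-- Lower natural density of a set of naturals. -/
noncomputable def lowerDensity (A : Set ℕ) : ℝ :=
  Filter.liminf (fun n : ℕ => ((A ∩ Set.Icc 1 n).ncard : ℝ) / n) Filter.atTop

/-- Upper natural density of a set of naturals. -/
noncomputable def upperDensity (A : Set ℕ) : ℝ :=
  Filter.limsup (fun n : ℕ => ((A ∩ Set.Icc 1 n).ncard : ℝ) / n) Filter.atTop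

open Filter Set

lemma ncard_inter_Icc_div_le_one (A : Set ℕ) (n : ℕ) :
    ((A ∩ Icc 1 n).ncard : ℝ) / n ≤ 1 := by
  have hcard : (A ∩ Icc 1 n).ncard ≤ n := by
    calc (A ∩ Icc 1 n).ncard ≤ (Icc 1 n).ncard :=
          ncard_le_ncard inter_subset_right (finite_Icc 1 n)
      _ = n := by simp
  exact div_le_one_of_le₀ (by exact_mod_cast hcard) n.cast_nonneg

lemma ncard_inter_Ico_mul_le (A : Set ℕ) {L : ℕ} {ρ : ℝ}
    (hsparse : ∀ s, ((A ∩ Ico s (s + L)).ncard : ℝ) ≤ ρ * L) (q : ℕ) :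
    ((A ∩ Ico 0 (q * L)).ncard : ℝ) ≤ q * (ρ * L) := by
  induction q with
  | zero => simp
  | succ q ih =>
    have hsplit :
        A ∩ Ico 0 ((q + 1) * L) = (A ∩ Ico 0 (q * L)) ∪ (A ∩ Ico (q * L) (q * L + L)) := by
      rw [← inter_union_distrib_left, Ico_union_Ico_eq_Ico (Nat.zero_le _) (by omega), add_mul,
        one_mul]
    calc ((A ∩ Ico 0 ((q + 1) * L)).ncard : ℝ)
        ≤ (A ∩ Ico 0 (q * L)).ncard + (A ∩ Ico (q * L) (q * L + L)).ncard := by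
          rw [hsplit]; exact_mod_cast ncard_union_le _ _
      _ ≤ q * (ρ * L) + ρ * L := add_le_add ih (hsparse _)
      _ = (q + 1 : ℕ) * (ρ * L) := by push_cast; ring

lemma exists_dense_window {A : Set ℕ} {ρ : ℝ} (hρ : ρ < upperDensity A) {L : ℕ}
    (hL : 0 < L) :
    ∃ s, ρ * L ≤ (A ∩ Ico s (s + L)).ncard := by
  by_contra! hsparse
  have hρ0 : 0 ≤ ρ :=
    nonneg_of_mul_nonneg_left ((Nat.cast_nonneg _).trans (hsparse 0).le) (by exact_mod_cast hL)
  have hcount : ∀ n : ℕ, ((A ∩ Icc 1 n).ncard : ℝ) ≤ ρ * (n + L) := by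
    intro n
    have hsub : A ∩ Icc 1 n ⊆ A ∩ Ico 0 ((n / L + 1) * L) := by
      refine inter_subset_inter_right A fun x hx => ⟨Nat.zero_le x, ?_⟩
      have := Nat.lt_div_mul_add (a := n) hL
      rw [add_mul, one_mul]; exact hx.2.trans_lt this
    have hq : ((n / L : ℕ) : ℝ) * L ≤ n := by exact_mod_cast Nat.div_mul_le_self n L
    calc ((A ∩ Icc 1 n).ncard : ℝ) ≤ (A ∩ Ico 0 ((n / L + 1) * L)).ncard := by
          exact_mod_cast ncard_le_ncard hsub ((finite_Ico _ _).inter_of_right A)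
      _ ≤ (n / L + 1 : ℕ) * (ρ * L) := ncard_inter_Ico_mul_le A (fun s => (hsparse s).le) _
      _ = ρ * ((n / L : ℕ) * L + L) := by push_cast; ring
      _ ≤ ρ * (n + L) := by gcongr
  obtain ⟨ρ', hρρ', hρ'⟩ := exists_between hρ
  have hfreq : ∃ᶠ n : ℕ in atTop, ρ' < ((A ∩ Icc 1 n).ncard : ℝ) / n :=
    frequently_lt_of_lt_limsup
      (isBoundedUnder_of ⟨0, fun n => by positivity⟩).isCoboundedUnder_le hρ'
  have hlarge : ∀ᶠ n : ℕ in atTop, ρ * L / (ρ' - ρ) < n :=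
    tendsto_natCast_atTop_atTop.eventually_gt_atTop _
  obtain ⟨n, hdense, hn⟩ := (hfreq.and_eventually hlarge).exists
  have hn0 : (0 : ℝ) < n := lt_of_le_of_lt (by have := sub_pos.2 hρρ'; positivity) hn
  rw [lt_div_iff₀ hn0] at hdense
  rw [div_lt_iff₀ (sub_pos.2 hρρ')] at hn
  linarith [hcount n]

namespace Szemeredi

def paste (A : Set ℕ) (w : ℕ → ℕ) : Set ℕ :=
  {x | w (Nat.log 2 x) + (x - 2 ^ Nat.log 2 x) ∈ A}

variable {A : Set ℕ} {w : ℕ → ℕ}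

lemma mem_paste_iff {i x : ℕ} (hx : x ∈ Ico (2 ^ i) (2 ^ (i + 1))) :
    x ∈ paste A w ↔ w i + (x - 2 ^ i) ∈ A := by
  rw [paste, mem_ofPred_eq, Nat.log_eq_of_pow_le_of_lt_pow hx.1 hx.2]

lemma ncard_window_le_ncard_paste_inter (i : ℕ) :
    (A ∩ Ico (w i) (w i + 2 ^ i)).ncard ≤ (paste A w ∩ Ico (2 ^ i) (2 ^ (i + 1))).ncard := by
  refine ncard_le_ncard_of_injOn (fun y => y - w i + 2 ^ i) (fun y ⟨hyA, hy⟩ => ?_)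
    (fun y hy z hz hyz => by have := hy.2.1; have := hz.2.1; simp only at hyz; omega)
    ((finite_Ico _ _).inter_of_right _)
  have hblock : y - w i + 2 ^ i ∈ Ico (2 ^ i) (2 ^ (i + 1)) := by
    constructor <;> simp only [mem_Ico, pow_succ] at hy ⊢ <;> omega
  refine ⟨(mem_paste_iff hblock).2 ?_, hblock⟩
  rwa [Nat.add_sub_cancel, Nat.add_sub_cancel' hy.1]

lemma le_lowerDensity_paste {ρ : ℝ} (hρ : 0 ≤ ρ)
    (hw : ∀ i, ρ * 2 ^ i ≤ (A ∩ Ico (w i) (w i + 2 ^ i)).ncard) :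
    ρ / 4 ≤ lowerDensity (paste A w) := by
  refine le_liminf_of_le
    (isBoundedUnder_of ⟨1, ncard_inter_Icc_div_le_one _⟩).isCoboundedUnder_ge
    (eventually_atTop.2 ⟨2, fun n hn => ?_⟩)
  -- the block `[2 ^ i, 2 ^ (i + 1))` with `i + 1 = log₂ n` lies in `[1, n]` and has length
  -- `2 ^ i > n / 4`
  set i := Nat.log 2 n - 1
  have hi : i + 1 = Nat.log 2 n := Nat.sub_add_cancel (Nat.log_pos one_lt_two hn)
  have hlow : 2 ^ (i + 1) ≤ n := hi ▸ Nat.pow_log_le_self 2 (by omega)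
  have hhigh : n < 4 * 2 ^ i := by
    have := Nat.lt_pow_succ_log_self one_lt_two n
    rw [← hi, Nat.succ_eq_add_one, pow_succ, pow_succ] at this; linarith
  have hsub : paste A w ∩ Ico (2 ^ i) (2 ^ (i + 1)) ⊆ paste A w ∩ Icc 1 n :=
    inter_subset_inter_right _ fun x hx =>
      ⟨Nat.one_le_two_pow.trans hx.1, by have := hx.2; omega⟩
  have hn0 : (0 : ℝ) < n := by positivity
  rw [le_div_iff₀ hn0]
  calc ρ / 4 * n ≤ ρ * 2 ^ i := by
        have : (n : ℝ) ≤ 4 * 2 ^ i := by exact_mod_cast hhigh.le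
        nlinarith
    _ ≤ (A ∩ Ico (w i) (w i + 2 ^ i)).ncard := hw i
    _ ≤ (paste A w ∩ Icc 1 n).ncard := by
        exact_mod_cast (ncard_window_le_ncard_paste_inter i).trans
          (ncard_le_ncard hsub ((finite_Icc _ _).inter_of_right _))

-- The second half of a `4k`-term progression lies in `[x / 2, x]` for its last term `x`, which
-- meets at most two dyadic blocks; one of them holds `k` consecutive terms.
lemma exists_consecutive_terms_mem_dyadic_block (a : ℕ) {d : ℕ} (hd : 1 ≤ d) (k : ℕ) :
    ∃ m i, m + k ≤ 4 * k ∧ ∀ s < k, a + (m + s) * d ∈ Ico (2 ^ i) (2 ^ (i + 1)) := by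
  rcases Nat.eq_zero_or_pos k with rfl | hk
  · exact ⟨0, 0, le_rfl, fun s hs => absurd hs (Nat.not_lt_zero s)⟩
  set x := a + (4 * k - 1) * d
  set j := Nat.log 2 x
  set i := Nat.log 2 (a + 3 * k * d)
  have hmono : ∀ {t t'}, t ≤ t' → a + t * d ≤ a + t' * d := fun h => by gcongr
  have hlast : ∀ {t}, t < 4 * k → a + t * d ≤ x := fun h => hmono (by omega)
  have hhalf : ∀ {t}, 2 * k ≤ t → x ≤ 2 * (a + t * d) := fun {t} h => by
    have : (4 * k - 1) * d ≤ 2 * (t * d) := by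
      rw [← mul_assoc]; exact Nat.mul_le_mul_right d (by omega)
    omega
  have hx0 : x ≠ 0 := by have := Nat.mul_le_mul (show 1 ≤ 4 * k - 1 by omega) hd; omega
  have hij : i ≤ j := Nat.log_mono_right (hlast (by omega))
  have hxj : x < 2 ^ (j + 1) := Nat.lt_pow_succ_log_self one_lt_two x
  have hmid0 : a + 3 * k * d ≠ 0 := by
    have := Nat.mul_le_mul (show 1 ≤ 3 * k by omega) hd; omega
  have hmidi : 2 ^ i ≤ a + 3 * k * d := Nat.pow_log_le_self 2 hmid0
  have hmidi' : a + 3 * k * d < 2 ^ (i + 1) := Nat.lt_pow_succ_log_self one_lt_two _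
  rcases hij.eq_or_lt with hij | hij
  · refine ⟨3 * k, i, by omega, fun s hs => ⟨hmidi.trans (hmono (by omega)), ?_⟩⟩
    rw [hij]; exact (hlast (by omega)).trans_lt hxj
  · refine ⟨2 * k, i, by omega, fun s hs => ⟨?_, (hmono (by omega)).trans_lt hmidi'⟩⟩
    have hxj' : 2 ^ j ≤ x := Nat.pow_log_le_self 2 hx0
    have hij' : 2 ^ (i + 1) ≤ 2 ^ j := Nat.pow_le_pow_right two_pos hij
    have := hhalf (t := 2 * k + s) (by omega)
    rw [pow_succ] at hij'
    omega

lemma hasAP_of_hasAP_paste {k : ℕ} (hB : HasAP (paste A w) (4 * k)) : HasAP A k := by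
  obtain ⟨a, d, hd, hap⟩ := hB
  obtain ⟨m, i, hmk, hblock⟩ := exists_consecutive_terms_mem_dyadic_block a hd k
  refine ⟨w i + (a + m * d - 2 ^ i), d, hd, fun s hs => ?_⟩
  have hmem := (mem_paste_iff (hblock s hs)).1 (hap (m + s) (by omega))
  have hstart := (hblock 0 (by omega)).1
  rw [add_zero] at hstart
  convert hmem using 1
  rw [add_mul]
  omega

end Szemeredi

open Szemeredi in
theorem stmt15
    (h : ∀ A : Set ℕ, 0 < lowerDensity A → ∀ k : ℕ, HasAP A k) :
    ∀ A : Set ℕ, 0 < upperDensity A → ∀ k : ℕ, HasAP A k := by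
  intro A hA k
  have hρ : upperDensity A / 2 < upperDensity A := half_lt_self hA
  choose w hw using fun i => exists_dense_window hρ (Nat.two_pow_pos i)
  have hw' : ∀ i, upperDensity A / 2 * 2 ^ i ≤ (A ∩ Ico (w i) (w i + 2 ^ i)).ncard := by
    exact_mod_cast hw
  have hB : 0 < lowerDensity (paste A w) :=
    (by positivity : 0 < upperDensity A / 2 / 4).trans_le
      (le_lowerDensity_paste (by positivity) hw')
  exact hasAP_of_hasAP_paste (h _ hB (4 * k))
end
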